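/- Let T > 0 and (E,d) a metric space, δ ∈ (0,1), p ∈ [1/δ,∞). For every continuous f : [0,T] → E and every subinterval [s,t] ⊆ [0,T], one has d(f_s,f_t)^{1/δ} ≤ ‖f‖_{V^{δ,p};[s,t]}^{1/δ} · |t-s|^{1 - 1/(δp)}, and the right-hand side, as a function of (s,t), is super-additive on Δ_T. -/

import Mathlib

open scoped ENNReal NNReal
open MeasureTheory

/-- `u 0, u 1, ..., u n` are the points of a partition of `[s,t]`. -/
def IsPart (s t : ℝ) (n : ℕ) (u : ℕ → ℝ) : Prop :=
  u 0 = s ∧ u n = t ∧ ∀ i < n, u i < u (i + 1)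

/-- Riesz-type sum of `f` along a partition, with parameters `δ, p`. -/
noncomputable def rieszSum {E : Type*} [PseudoEMetricSpace E] (f : ℝ → E) (δ p : ℝ)
    (n : ℕ) (u : ℕ → ℝ) : ℝ≥0∞ :=
  ∑ i ∈ Finset.range n,
    edist (f (u i)) (f (u (i + 1))) ^ p / ENNReal.ofReal (u (i + 1) - u i) ^ (δ * p - 1)

/-- Riesz type variation seminorm `‖f‖_{V^{δ,p};[s,t]}`. -/
noncomputable def VNorm {E : Type*} [PseudoEMetricSpace E] (f : ℝ → E) (δ p : ℝ)
    (s t : ℝ) : ℝ≥0∞ :=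
  (⨆ n, ⨆ u, ⨆ _ : IsPart s t n u, rieszSum f δ p n u) ^ (1 / p)

/-- `q`-variation seminorm `‖f‖_{q-var;[s,t]}`. -/
noncomputable def qVar {E : Type*} [PseudoEMetricSpace E] (f : ℝ → E) (q : ℝ)
    (s t : ℝ) : ℝ≥0∞ :=
  (⨆ n, ⨆ u, ⨆ _ : IsPart s t n u,
    ∑ i ∈ Finset.range n, edist (f (u i)) (f (u (i + 1))) ^ q) ^ (1 / q)

/-- `δ`-Hölder seminorm on `[s,t]`, i.e. `‖f‖_{V^{δ,∞};[s,t]}`. -/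
noncomputable def holNorm {E : Type*} [PseudoEMetricSpace E] (f : ℝ → E) (δ : ℝ)
    (s t : ℝ) : ℝ≥0∞ :=
  ⨆ u, ⨆ v, ⨆ _ : s ≤ u ∧ u < v ∧ v ≤ t,
    edist (f u) (f v) / ENNReal.ofReal (v - u) ^ δ

/-- Nikolskii seminorm `‖f‖_{N^{δ,p};[s,t]}`. -/
noncomputable def nikNorm {E : Type*} [PseudoEMetricSpace E] (f : ℝ → E) (δ p : ℝ)
    (s t : ℝ) : ℝ≥0∞ :=
  ⨆ h : ℝ, ⨆ _ : 0 < h ∧ h ≤ t - s,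
    ENNReal.ofReal h ^ (-δ) *
      (∫⁻ r in Set.Ioc s (t - h), edist (f r) (f (r + h)) ^ p) ^ (1 / p)

/-- Refined Nikolskii seminorm `‖f‖_{\hat N^{δ,p};[s,t]}`. -/
noncomputable def nikHatNorm {E : Type*} [PseudoEMetricSpace E] (f : ℝ → E) (δ p : ℝ)
    (s t : ℝ) : ℝ≥0∞ :=
  (⨆ n, ⨆ u, ⨆ _ : IsPart s t n u,
    ∑ i ∈ Finset.range n, nikNorm f δ p (u i) (u (i + 1)) ^ p) ^ (1 / p)

/-- Mixed Hölder-variation seminorm `‖f‖_{\tilde V^{δ,p};[s,t]}`. -/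
noncomputable def tildeVNorm {E : Type*} [PseudoEMetricSpace E] (f : ℝ → E) (δ p : ℝ)
    (s t : ℝ) : ℝ≥0∞ :=
  (⨆ n, ⨆ u, ⨆ _ : IsPart s t n u,
    ∑ i ∈ Finset.range n,
      qVar f (1 / δ) (u i) (u (i + 1)) ^ p
        / ENNReal.ofReal (u (i + 1) - u i) ^ (δ * p - 1)) ^ (1 / p)

/-- Fractional Sobolev (Sobolev–Slobodeckij) seminorm `‖f‖_{W^{δ,p};[s,t]}`. -/
noncomputable def sobNorm {E : Type*} [PseudoEMetricSpace E] (f : ℝ → E) (δ p : ℝ)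
    (s t : ℝ) : ℝ≥0∞ :=
  (∫⁻ v in Set.Ioc s t, ∫⁻ u in Set.Ioc s t,
    edist (f u) (f v) ^ p / ENNReal.ofReal |v - u| ^ (1 + δ * p)) ^ (1 / p)

/-!
Put `θ = 1 / (δ p) ∈ (0, 1]` and let `ω(s, t)` be the supremum of the Riesz sums over partitions
of `[s, t]`, so that `‖f‖_{V^{δ,p};[s,t]}^{1/δ} = ω(s, t)^θ`. The one-interval partition gives
`d(f_s, f_t)^p ≤ ω(s, t) (t - s)^{δp - 1}`, which is the pointwise bound raised to the power `1/θ`.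
Concatenating partitions makes `ω` super-additive, and `(a, b) ↦ a^θ b^{1-θ}` is super-additive
by Hölder's inequality, so `ω(s, t)^θ (t - s)^{1-θ}` is super-additive.
-/

theorem ENNReal.rpow_mul_rpow_one_sub_add_le {θ : ℝ} (hθ₀ : 0 ≤ θ) (hθ₁ : θ ≤ 1)
    (a b c d : ℝ≥0∞) :
    a ^ θ * b ^ (1 - θ) + c ^ θ * d ^ (1 - θ) ≤ (a + c) ^ θ * (b + d) ^ (1 - θ) := by
  rcases hθ₀.eq_or_lt with rfl | hθ₀
  · simp
  rcases hθ₁.eq_or_lt with rfl | hθ₁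
  · simp
  have key := ENNReal.inner_le_Lp_mul_Lq Finset.univ ![a ^ θ, c ^ θ] ![b ^ (1 - θ), d ^ (1 - θ)]
    (Real.HolderConjugate.inv_one_sub_inv hθ₀ hθ₁)
  simpa [Fin.sum_univ_two, ← ENNReal.rpow_mul, hθ₀.ne', (sub_pos.2 hθ₁).ne'] using key

theorem isPart_pair {s t : ℝ} (h : s < t) : IsPart s t 1 (fun i => if i = 0 then s else t) :=
  ⟨rfl, rfl, fun i hi => by simpa [Nat.lt_one_iff.1 hi] using h⟩

theorem exists_isPart {s t : ℝ} (h : s ≤ t) :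
    ∃ x : ℕ × (ℕ → ℝ), IsPart s t x.1 x.2 := by
  rcases h.eq_or_lt with rfl | h
  · exact ⟨(0, fun _ => s), rfl, rfl, nofun⟩
  · exact ⟨(1, _), isPart_pair h⟩

def partAppend (n₁ : ℕ) (u₁ u₂ : ℕ → ℝ) (i : ℕ) : ℝ :=
  if i ≤ n₁ then u₁ i else u₂ (i - n₁)

section Partition

variable {n₁ : ℕ} {u₁ u₂ : ℕ → ℝ}

theorem partAppend_of_le {i : ℕ} (hi : i ≤ n₁) : partAppend n₁ u₁ u₂ i = u₁ i :=
  if_pos hi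

theorem partAppend_add (h : u₁ n₁ = u₂ 0) (j : ℕ) :
    partAppend n₁ u₁ u₂ (n₁ + j) = u₂ j := by
  rcases Nat.eq_zero_or_pos j with rfl | hj
  · simpa [partAppend] using h
  · simp [partAppend, hj.ne']

theorem IsPart.append {s t v : ℝ} {n₂ : ℕ} (h₁ : IsPart s t n₁ u₁)
    (h₂ : IsPart t v n₂ u₂) : IsPart s v (n₁ + n₂) (partAppend n₁ u₁ u₂) := by
  have hjoin : u₁ n₁ = u₂ 0 := h₁.2.1.trans h₂.1.symm
  refine ⟨(partAppend_of_le n₁.zero_le).trans h₁.1,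
    (partAppend_add hjoin n₂).trans h₂.2.1, fun i hi => ?_⟩
  rcases lt_or_ge i n₁ with hi₁ | hi₁
  · rw [partAppend_of_le hi₁.le, partAppend_of_le hi₁]
    exact h₁.2.2 i hi₁
  · obtain ⟨j, rfl⟩ := Nat.exists_eq_add_of_le hi₁
    rw [partAppend_add hjoin, add_assoc, partAppend_add hjoin]
    exact h₂.2.2 j (by omega)

end Partition

section RieszSup

variable {E : Type*} [PseudoEMetricSpace E] (f : ℝ → E) (δ p : ℝ)

theorem rieszSum_partAppend {n₁ : ℕ} {u₁ u₂ : ℕ → ℝ} (h : u₁ n₁ = u₂ 0) (n₂ : ℕ) :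
    rieszSum f δ p (n₁ + n₂) (partAppend n₁ u₁ u₂) =
      rieszSum f δ p n₁ u₁ + rieszSum f δ p n₂ u₂ := by
  rw [rieszSum, Finset.sum_range_add]
  congr 1
  · refine Finset.sum_congr rfl fun i hi => ?_
    rw [Finset.mem_range] at hi
    rw [partAppend_of_le hi.le, partAppend_of_le hi]
  · refine Finset.sum_congr rfl fun j _ => ?_
    rw [partAppend_add h, add_assoc, partAppend_add h]

theorem rieszSum_pair (s t : ℝ) :
    rieszSum f δ p 1 (fun i => if i = 0 then s else t) =
      edist (f s) (f t) ^ p / ENNReal.ofReal (t - s) ^ (δ * p - 1) := by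
  simp [rieszSum]

noncomputable def rieszSup (s t : ℝ) : ℝ≥0∞ :=
  ⨆ n, ⨆ u, ⨆ _ : IsPart s t n u, rieszSum f δ p n u

theorem VNorm_eq_rieszSup_rpow (s t : ℝ) : VNorm f δ p s t = rieszSup f δ p s t ^ (1 / p) := rfl

variable {f δ p}

theorem rieszSum_le_rieszSup {s t : ℝ} {n : ℕ} {u : ℕ → ℝ} (h : IsPart s t n u) :
    rieszSum f δ p n u ≤ rieszSup f δ p s t :=
  le_iSup_of_le n <| le_iSup_of_le u <| le_iSup_of_le h le_rfl

theorem rieszSup_eq_iSup_prod (s t : ℝ) :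
    rieszSup f δ p s t =
      ⨆ x : ℕ × (ℕ → ℝ), ⨆ _ : IsPart s t x.1 x.2, rieszSum f δ p x.1 x.2 :=
  (iSup_prod (f := fun x : ℕ × (ℕ → ℝ) =>
    ⨆ _ : IsPart s t x.1 x.2, rieszSum f δ p x.1 x.2)).symm

theorem rieszSup_add_rieszSup_le {s t v : ℝ} (hst : s ≤ t) (htv : t ≤ v) :
    rieszSup f δ p s t + rieszSup f δ p t v ≤ rieszSup f δ p s v := by
  rw [rieszSup_eq_iSup_prod, rieszSup_eq_iSup_prod]
  refine ENNReal.biSup_add_biSup_le' (exists_isPart hst) (exists_isPart htv) fun x h₁ y h₂ => ?_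
  rw [← rieszSum_partAppend f δ p (h₁.2.1.trans h₂.1.symm)]
  exact rieszSum_le_rieszSup (h₁.append h₂)

theorem edist_rpow_le_rieszSup_mul (hp : 0 < p) {s t : ℝ} (hst : s ≤ t) :
    edist (f s) (f t) ^ p ≤ rieszSup f δ p s t * ENNReal.ofReal (t - s) ^ (δ * p - 1) := by
  rcases hst.eq_or_lt with rfl | hst
  · simp [ENNReal.zero_rpow_of_pos hp]
  have hlen : 0 < ENNReal.ofReal (t - s) := ENNReal.ofReal_pos.2 (sub_pos.2 hst)
  rw [← ENNReal.div_le_iff (ENNReal.rpow_pos hlen ENNReal.ofReal_ne_top).ne'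
    (ENNReal.rpow_ne_top_of_ne_zero hlen.ne' ENNReal.ofReal_ne_top), ← rieszSum_pair]
  exact rieszSum_le_rieszSup (isPart_pair hst)

theorem VNorm_rpow_one_div (s t : ℝ) :
    VNorm f δ p s t ^ (1 / δ) = rieszSup f δ p s t ^ (1 / (δ * p)) := by
  rw [VNorm_eq_rieszSup_rpow, ← ENNReal.rpow_mul, div_mul_div_comm, one_mul, mul_comm p]

end RieszSup

theorem edist_rpow_le_superadditive_control_general {E : Type*} [PseudoEMetricSpace E]
    (T δ p : ℝ) (f : ℝ → E)
    (hδ : 0 < δ) (hp : 1 / δ ≤ p) :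
    (∀ s t, 0 ≤ s → s ≤ t → t ≤ T →
      edist (f s) (f t) ^ (1 / δ) ≤
        VNorm f δ p s t ^ (1 / δ) * ENNReal.ofReal (t - s) ^ (1 - 1 / (δ * p))) ∧
    (∀ s t u, 0 ≤ s → s ≤ t → t ≤ u → u ≤ T →
      VNorm f δ p s t ^ (1 / δ) * ENNReal.ofReal (t - s) ^ (1 - 1 / (δ * p)) +
        VNorm f δ p t u ^ (1 / δ) * ENNReal.ofReal (u - t) ^ (1 - 1 / (δ * p)) ≤
      VNorm f δ p s u ^ (1 / δ) * ENNReal.ofReal (u - s) ^ (1 - 1 / (δ * p))) := by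
  have hp₀ : 0 < p := (one_div_pos.2 hδ).trans_le hp
  have hδp : 1 ≤ δ * p := by rwa [div_le_iff₀' hδ] at hp
  have hθ₀ : 0 < 1 / (δ * p) := one_div_pos.2 (by linarith)
  have hθ₁ : 1 / (δ * p) ≤ 1 := (div_le_one (by linarith)).2 hδp
  refine ⟨fun s t _ hst _ => ?_, fun s t u _ hst htu _ => ?_⟩
  · rw [VNorm_rpow_one_div]
    calc edist (f s) (f t) ^ (1 / δ) = (edist (f s) (f t) ^ p) ^ (1 / (δ * p)) := by
          rw [← ENNReal.rpow_mul]; field_simp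
      _ ≤ (rieszSup f δ p s t * ENNReal.ofReal (t - s) ^ (δ * p - 1)) ^ (1 / (δ * p)) := by
          gcongr; exact edist_rpow_le_rieszSup_mul hp₀ hst
      _ = rieszSup f δ p s t ^ (1 / (δ * p)) * ENNReal.ofReal (t - s) ^ (1 - 1 / (δ * p)) := by
          rw [ENNReal.mul_rpow_of_nonneg _ _ hθ₀.le, ← ENNReal.rpow_mul]; field_simp
  · simp only [VNorm_rpow_one_div]
    refine (ENNReal.rpow_mul_rpow_one_sub_add_le hθ₀.le hθ₁ _ _ _ _).trans ?_
    rw [← ENNReal.ofReal_add (by linarith) (by linarith), sub_add_sub_cancel']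
    gcongr
    exact rieszSup_add_rieszSup_le hst htu

/-- pointwise estimate via a super-additive control. -/
theorem edist_rpow_le_superadditive_control {E : Type*} [PseudoEMetricSpace E]
    (T δ p : ℝ) (f : ℝ → E)
    (hT : 0 < T) (hδ : 0 < δ) (hδ1 : δ < 1) (hp : 1 / δ ≤ p)
    (hf : ContinuousOn f (Set.Icc 0 T)) :
    (∀ s t, 0 ≤ s → s ≤ t → t ≤ T →
      edist (f s) (f t) ^ (1 / δ) ≤
        VNorm f δ p s t ^ (1 / δ) * ENNReal.ofReal (t - s) ^ (1 - 1 / (δ * p))) ∧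
    (∀ s t u, 0 ≤ s → s ≤ t → t ≤ u → u ≤ T →
      VNorm f δ p s t ^ (1 / δ) * ENNReal.ofReal (t - s) ^ (1 - 1 / (δ * p)) +
        VNorm f δ p t u ^ (1 / δ) * ENNReal.ofReal (u - t) ^ (1 - 1 / (δ * p)) ≤
      VNorm f δ p s u ^ (1 / δ) * ENNReal.ofReal (u - s) ^ (1 - 1 / (δ * p))) :=
  edist_rpow_le_superadditive_control_general T δ p f hδ hp
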